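/- The fingerprinting lemma for bounded bias: for every function f : {−1,1}^n → [−1/3, 1/3], if P is drawn uniformly from [−1/3, 1/3] and X₁,…,X_n are drawn i.i.d. from the ±1-valued distribution with mean P, then E[ ((1/9 − P²)/(1 − P²)) · (f(X) − P) · Σ_{i=1}^n (X_i − P) + (f(X) − P)² ] ≥ 1/27. -/

import Mathlib

open MeasureTheory

/-- The `±1` value encoded by a boolean. -/
noncomputable def pmSign (b : Bool) : ℝ := if b then 1 else -1

/-- The probability mass function of the `{−1,1}`-valued distribution with mean `p`,
where `b = true` encodes `+1`. -/
noncomputable def berPM (p : ℝ) (b : Bool) : ℝ := if b then (1 + p) / 2 else (1 - p) / 2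

/-!
Write `g(p) = E_p[f]`. The score identity `(1 - p²) ∂ₚ Pr_p[x] = Pr_p[x] · Σᵢ (xᵢ - p)` turns the
first term of the integrand into `(a² - p²) g'(p)`, and Jensen bounds the second below by
`(g(p) - p)² ≥ p² - 2p g(p)`. Together they dominate `d/dp[(a² - p²) g(p)] + p²`; the bracket
vanishes at `p = ±a`, so the integral over `[-a, a]` is at least `∫ p² = 2a³/3`, and `a = 1/3`
gives the theorem once the uniform density `3/2` is applied.
-/

open Finset Set

lemma berPM_eq (p : ℝ) (b : Bool) : berPM p b = (1 + pmSign b * p) / 2 := by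
  unfold berPM pmSign
  split_ifs <;> ring

lemma berPM_nonneg {p : ℝ} (hp : p ∈ Icc (-1 : ℝ) 1) (b : Bool) : 0 ≤ berPM p b := by
  unfold berPM
  split_ifs <;> linarith [hp.1, hp.2]

lemma hasDerivAt_berPM (b : Bool) (p : ℝ) : HasDerivAt (berPM · b) (pmSign b / 2) p := by
  simp only [berPM_eq]
  simpa using ((hasDerivAt_id p).const_mul (pmSign b)).const_add 1 |>.div_const 2

lemma one_sub_sq_mul_deriv_berPM (p : ℝ) (b : Bool) :
    (1 - p ^ 2) * (pmSign b / 2) = (pmSign b - p) * berPM p b := by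
  unfold berPM pmSign
  split_ifs <;> ring

section Product

variable {ι : Type*} [Fintype ι]

noncomputable def berProd (p : ℝ) (x : ι → Bool) : ℝ := ∏ i, berPM p (x i)

lemma berProd_nonneg {p : ℝ} (hp : p ∈ Icc (-1 : ℝ) 1) (x : ι → Bool) : 0 ≤ berProd p x :=
  prod_nonneg fun i _ => berPM_nonneg hp (x i)

lemma sum_berProd [DecidableEq ι] (p : ℝ) : ∑ x : ι → Bool, berProd p x = 1 := by
  simp only [berProd]
  rw [← Fintype.prod_sum]
  refine prod_eq_one fun _ _ => ?_
  simp only [Fintype.sum_bool, berPM, if_true, Bool.false_eq_true, if_false]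
  ring

lemma contDiff_berProd (x : ι → Bool) : ContDiff ℝ ⊤ (berProd · x) := by
  simp only [berProd, berPM_eq]
  fun_prop

lemma one_sub_sq_mul_deriv_berProd [DecidableEq ι] (x : ι → Bool) (p : ℝ) :
    (1 - p ^ 2) * deriv (berProd · x) p = (∑ i, (pmSign (x i) - p)) * berProd p x := by
  have h := HasDerivAt.fun_finsetProd (u := univ) (f := fun i p => berPM p (x i))
    (fun i _ => hasDerivAt_berPM (x i) p)
  rw [show (berProd · x) = fun p => ∏ i, berPM p (x i) from rfl, h.deriv, mul_sum, sum_mul]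
  refine sum_congr rfl fun i _ => ?_
  rw [berProd, ← mul_prod_erase univ _ (mem_univ i), smul_eq_mul, mul_left_comm,
    one_sub_sq_mul_deriv_berPM]
  ring

end Product

section Mean

variable {ι : Type*} [Fintype ι] [DecidableEq ι]

noncomputable def berMean (h : (ι → Bool) → ℝ) (p : ℝ) : ℝ := ∑ x, berProd p x * h x

lemma contDiff_berMean (h : (ι → Bool) → ℝ) : ContDiff ℝ ⊤ (berMean h) :=
  ContDiff.sum fun x _ => (contDiff_berProd x).mul contDiff_const

lemma one_sub_sq_mul_deriv_berMean (h : (ι → Bool) → ℝ) (p : ℝ) :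
    (1 - p ^ 2) * deriv (berMean h) p =
      berMean (fun x => (∑ i, (pmSign (x i) - p)) * h x) p := by
  have hd (x : ι → Bool) : DifferentiableAt ℝ (berProd · x) p :=
    (contDiff_berProd x).differentiable (by simp) p
  rw [show berMean h = fun q => ∑ x, berProd q x * h x from rfl,
    deriv_fun_sum fun x _ => (hd x).mul_const _, berMean, mul_sum]
  refine sum_congr rfl fun x _ => ?_
  rw [deriv_mul_const (hd x), ← mul_assoc, one_sub_sq_mul_deriv_berProd]
  ring

lemma berMean_score (p : ℝ) : berMean (fun x : ι → Bool => ∑ i, (pmSign (x i) - p)) p = 0 := by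
  have hconst : berMean (fun _ : ι → Bool => (1 : ℝ)) = fun _ => 1 :=
    funext fun q => by simp [berMean, sum_berProd]
  simpa [hconst] using (one_sub_sq_mul_deriv_berMean (fun _ : ι → Bool => 1) p).symm

lemma sq_berMean_sub_le {p : ℝ} (hp : p ∈ Icc (-1 : ℝ) 1) (h : (ι → Bool) → ℝ) :
    (berMean h p - p) ^ 2 ≤ berMean (fun x => (h x - p) ^ 2) p := by
  have hsub : berMean h p - p = ∑ x, berProd p x • (h x - p) := by
    simp [berMean, mul_sub, sum_sub_distrib, ← sum_mul, sum_berProd]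
  rw [hsub]
  exact even_two.convexOn_pow.map_sum_le (fun x _ => berProd_nonneg hp x) (sum_berProd (ι := ι) p)
    fun _ _ => Set.mem_univ _

lemma sum_berProd_mul_fingerprint_eq (c : ℝ) {p : ℝ} (hp : 1 - p ^ 2 ≠ 0) (f : (ι → Bool) → ℝ) :
    ∑ x, berProd p x * (c / (1 - p ^ 2) * (f x - p) * (∑ i, (pmSign (x i) - p)) + (f x - p) ^ 2)
      = c * deriv (berMean f) p + berMean (fun x => (f x - p) ^ 2) p := by
  have hderiv := one_sub_sq_mul_deriv_berMean f p
  have hscore := berMean_score (ι := ι) p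
  unfold berMean at hderiv hscore ⊢
  calc _ = c / (1 - p ^ 2) * ∑ x, berProd p x * ((∑ i, (pmSign (x i) - p)) * f x)
        - c / (1 - p ^ 2) * p * ∑ x, berProd p x * ∑ i, (pmSign (x i) - p)
        + ∑ x, berProd p x * (f x - p) ^ 2 := by
          rw [mul_sum, mul_sum, ← sum_sub_distrib, ← sum_add_distrib]
          exact sum_congr rfl fun x _ => by ring
    _ = _ := by
      rw [← hderiv, hscore]
      field_simp
      ring

lemma deriv_add_sq_le (a : ℝ) {p : ℝ} (hp : p ∈ Icc (-1 : ℝ) 1) (f : (ι → Bool) → ℝ) :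
    deriv (fun q => (a ^ 2 - q ^ 2) * berMean f q) p + p ^ 2 ≤
      (a ^ 2 - p ^ 2) * deriv (berMean f) p + berMean (fun x => (f x - p) ^ 2) p := by
  have hg := ((contDiff_berMean f).differentiable (by simp) p).hasDerivAt
  have hc : HasDerivAt (fun q => a ^ 2 - q ^ 2) (-(2 * p)) p := by
    simpa using (hasDerivAt_pow 2 p).const_sub (a ^ 2)
  rw [(hc.fun_mul hg).deriv]
  nlinarith [sq_berMean_sub_le hp f, sq_nonneg (berMean f p)]

end Mean

theorem le_integral_fingerprint {ι : Type*} [Fintype ι] [DecidableEq ι] {a : ℝ} (ha : 0 ≤ a)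
    (ha1 : a < 1) (f : (ι → Bool) → ℝ) :
    2 * a ^ 3 / 3 ≤ ∫ p in Icc (-a) a, ∑ x, berProd p x *
      ((a ^ 2 - p ^ 2) / (1 - p ^ 2) * (f x - p) * (∑ i, (pmSign (x i) - p)) + (f x - p) ^ 2) := by
  set G : ℝ → ℝ := fun q => (a ^ 2 - q ^ 2) * berMean f q
  have hG : ContDiff ℝ ⊤ G := (contDiff_const.sub (contDiff_id.pow 2)).mul (contDiff_berMean f)
  have hG' : Continuous (deriv G) := hG.continuous_deriv (by simp)
  have hvar : Continuous fun p => berMean (fun x => (f x - p) ^ 2) p := by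
    simp only [berMean, berProd, berPM_eq]
    fun_prop
  have hupper : Continuous fun p => (a ^ 2 - p ^ 2) * deriv (berMean f) p
      + berMean (fun x => (f x - p) ^ 2) p :=
    ((continuous_const.sub (continuous_pow 2)).mul
      ((contDiff_berMean f).continuous_deriv (by simp))).add hvar
  have hIcc (p : ℝ) (hp : p ∈ Icc (-a) a) : p ∈ Icc (-1 : ℝ) 1 :=
    ⟨by linarith [hp.1], by linarith [hp.2]⟩
  have hlower : ∫ p in Icc (-a) a, (deriv G p + p ^ 2) = 2 * a ^ 3 / 3 := by
    rw [integral_Icc_eq_integral_Ioc, ← intervalIntegral.integral_of_le (by linarith),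
      intervalIntegral.integral_add (hG'.intervalIntegrable _ _)
        ((continuous_pow 2).intervalIntegrable _ _),
      intervalIntegral.integral_deriv_eq_sub (fun p _ => hG.differentiable (by simp) p)
        (hG'.intervalIntegrable _ _), integral_pow]
    simp only [G]
    ring
  calc 2 * a ^ 3 / 3 = ∫ p in Icc (-a) a, (deriv G p + p ^ 2) := hlower.symm
    _ ≤ ∫ p in Icc (-a) a, ((a ^ 2 - p ^ 2) * deriv (berMean f) p
          + berMean (fun x => (f x - p) ^ 2) p) :=
      setIntegral_mono_on (hG'.add (continuous_pow 2)).integrableOn_Icc hupper.integrableOn_Icc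
        measurableSet_Icc fun p hp => deriv_add_sq_le a (hIcc p hp) f
    _ = _ := setIntegral_congr_fun measurableSet_Icc fun p hp =>
      (sum_berProd_mul_fingerprint_eq _ (by nlinarith [hp.1, hp.2]) f).symm

theorem stmt_7_general (n : ℕ) (f : (Fin n → Bool) → ℝ) :
    (3/2) * ∫ p in Set.Icc (-(1/3) : ℝ) (1/3),
      ∑ x : Fin n → Bool, (∏ i, berPM p (x i)) *
        (((1/9 - p^2) / (1 - p^2)) * (f x - p) * (∑ i, (pmSign (x i) - p))
          + (f x - p)^2)
      ≥ 1/27 := by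
  have h := le_integral_fingerprint (a := 1 / 3) (by norm_num) (by norm_num) f
  norm_num [berProd] at h ⊢
  linarith

/-- Fingerprinting lemma: for any `f : {−1,1}ⁿ → [−1/3, 1/3]`, with `P` uniform on
`[−1/3,1/3]` and `X₁,…,Xₙ` i.i.d. `±1`-valued with mean `P`,
`E[ ((1/9 − P²)/(1 − P²))·(f(X) − P)·Σᵢ(Xᵢ − P) + (f(X) − P)² ] ≥ 1/27`.
The expectation over `P` is written as an integral against the uniform density `3/2`
on `[−1/3,1/3]`, and the expectation over `X` as a sum over `{−1,1}ⁿ`. -/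
theorem stmt_7 (n : ℕ) (f : (Fin n → Bool) → ℝ)
    (hf : ∀ x, f x ∈ Set.Icc (-(1/3) : ℝ) (1/3)) :
    (3/2) * ∫ p in Set.Icc (-(1/3) : ℝ) (1/3),
      ∑ x : Fin n → Bool, (∏ i, berPM p (x i)) *
        (((1/9 - p^2) / (1 - p^2)) * (f x - p) * (∑ i, (pmSign (x i) - p))
          + (f x - p)^2)
      ≥ 1/27 :=
  stmt_7_general n f
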